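/- arXiv:2501.00281 — 3 statements merged into one kernel-verified Lean document; each statement's English description precedes it below -/
import Mathlib

section
/- Let p ∈ (0,1/2), 0 < ε < 1/2 − p, and let x, y ∈ {0,1}^n have Hamming distance 2σn with σ ≤ p + 2ε. Then |T^n_{W,ε}(x) ∩ T^n_{W,ε}(y)| ≤ (√2·εn + 1)² · 2^{n[(1−2σ)·h((p−σ+ε)/(1−2σ)) + 2σ]}, where h is the binary entropy function. -/
/-
Split the coordinates into the `n - d` where `x` and `y` agree and the `d` where they differ,
and let `j`, `k` count the positions of each kind where `z` differs from `x` (`hammingProfile`).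
Then `d(x,z) = j + k` and `d(x,z) + d(y,z) = 2j + d`, so the two distances determine `(j, k)`,
and `z` lying in both typical sets forces `j ≤ n(p + ε) - d/2`. At most
`C(n-d, j) C(d, k) ≤ 2^((n-d) h(j/(n-d)) + d)` words have a given profile, and monotonicity of
`h` on `[0, 1/2]` bounds this by the exponent of the theorem. The distance pairs are lattice
points of a square of side `2εn` with `d(x,z) + d(y,z) ≡ d (mod 2)`; there are at most
`2(εn)² + 2εn + 1 ≤ (√2 εn + 1)²` of them.
-/

open scoped Classical

/-- Binary entropy function (base-2 logarithm); `Real.logb 2 0 = 0` so `h 0 = h 1 = 0`. -/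
noncomputable def binH (q : ℝ) : ℝ := -q * Real.logb 2 q - (1 - q) * Real.logb 2 (1 - q)

/-- Conditional typical set for a BSC with crossover `p` and slack `ε`, as a `Finset`. -/
noncomputable def typSet (n : ℕ) (p ε : ℝ) (x : Fin n → Bool) : Finset (Fin n → Bool) :=
  Finset.univ.filter (fun z =>
    (n : ℝ) * (p - ε) ≤ (hammingDist x z : ℝ) ∧ (hammingDist x z : ℝ) ≤ (n : ℝ) * (p + ε))

open Finset Real

lemma binH_eq_binEntropy_div_log_two (q : ℝ) : binH q = binEntropy q / log 2 := by
  simp only [binH, binEntropy, logb, log_inv]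
  ring

lemma binH_le_binH {a b : ℝ} (ha : 0 ≤ a) (hab : a ≤ b) (hb : b ≤ 1 / 2) :
    binH a ≤ binH b := by
  rw [binH_eq_binEntropy_div_log_two, binH_eq_binEntropy_div_log_two]
  gcongr
  exact binEntropy_strictMonoOn.monotoneOn ⟨ha, by linarith⟩ ⟨by linarith, by linarith⟩ hab

lemma mul_binH_div_le_mul_binH_div {j c m : ℝ} (hj : 0 ≤ j) (hm : 0 ≤ m) (hjc : j ≤ c)
    (hc : c ≤ m / 2) : m * binH (j / m) ≤ m * binH (c / m) := by
  rcases hm.eq_or_lt with rfl | hm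
  · simp
  gcongr
  apply binH_le_binH (by positivity) (by gcongr)
  rw [div_le_iff₀ hm]
  linarith

lemma two_rpow_mul_binH (m q : ℝ) : (2 : ℝ) ^ (m * binH q) = exp (m * binEntropy q) := by
  rw [rpow_def_of_pos two_pos, binH_eq_binEntropy_div_log_two]
  field_simp

lemma choose_mul_pow_mul_pow_le_one {m j : ℕ} (hj : j ≤ m) {q : ℝ} (hq₀ : 0 ≤ q)
    (hq₁ : q ≤ 1) : m.choose j * q ^ j * (1 - q) ^ (m - j) ≤ 1 := by
  have hq₁' : 0 ≤ 1 - q := by linarith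
  calc (m.choose j : ℝ) * q ^ j * (1 - q) ^ (m - j)
      = q ^ j * (1 - q) ^ (m - j) * m.choose j := by ring
    _ ≤ ∑ i ∈ range (m + 1), q ^ i * (1 - q) ^ (m - i) * m.choose i :=
      single_le_sum (f := fun i => q ^ i * (1 - q) ^ (m - i) * m.choose i)
        (fun i _ => by positivity) (mem_range.2 (Nat.lt_succ_of_le hj))
    _ = 1 := by rw [← add_pow, add_sub_cancel, one_pow]

lemma choose_le_two_rpow_binH (m j : ℕ) : (m.choose j : ℝ) ≤ 2 ^ (m * binH (j / m)) := by
  rcases lt_or_ge m j with hmj | hjm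
  · rw [Nat.choose_eq_zero_of_lt hmj, Nat.cast_zero]; positivity
  rcases j.eq_zero_or_pos with rfl | hj
  · simp [binH_eq_binEntropy_div_log_two]
  rcases hjm.eq_or_lt with rfl | hjm
  · simp [div_self (Nat.cast_ne_zero.2 hj.ne' : (j : ℝ) ≠ 0), binH_eq_binEntropy_div_log_two]
  have hm : (0 : ℝ) < m := by exact_mod_cast hj.trans hjm
  set q : ℝ := j / m with hq
  have hq₀ : 0 < q := div_pos (by positivity) hm
  have hq₁ : 0 < 1 - q := by
    rw [sub_pos, hq, div_lt_one hm]; exact_mod_cast hjm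
  have hmq : m * q = j := by rw [hq]; field_simp
  -- `2 ^ (m h(q))` is the reciprocal of the binomial weight `q^j (1-q)^(m-j)`
  have hexp : m * binEntropy q = -log (q ^ j * (1 - q) ^ (m - j)) := by
    rw [log_mul (by positivity) (by positivity), log_pow, log_pow, binEntropy, log_inv, log_inv,
      Nat.cast_sub hjm.le, ← hmq]
    ring
  rw [two_rpow_mul_binH, hexp, exp_neg, exp_log (by positivity), ← one_div,
    le_div_iff₀ (by positivity), ← mul_assoc]
  exact choose_mul_pow_mul_pow_le_one hjm.le hq₀.le (by linarith)

lemma card_le_of_forall_mem_Icc {s : Finset ℕ} {a b : ℝ} (hab : a ≤ b)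
    (hs : ∀ u ∈ s, (u : ℝ) ∈ Set.Icc a b) : (#s : ℝ) ≤ b - a + 1 := by
  rcases s.eq_empty_or_nonempty with rfl | ⟨u₀, hu₀⟩
  · simp only [card_empty, Nat.cast_zero]; linarith
  have hsub : s ⊆ Icc ⌈a⌉₊ ⌊b⌋₊ := fun u hu =>
    mem_Icc.2 ⟨Nat.ceil_le.2 (hs u hu).1, Nat.le_floor (hs u hu).2⟩
  have hne : ⌈a⌉₊ ≤ ⌊b⌋₊ + 1 := by have := mem_Icc.1 (hsub hu₀); omega
  have hb : 0 ≤ b := (Nat.cast_nonneg u₀).trans (hs u₀ hu₀).2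
  calc (#s : ℝ) ≤ ((⌊b⌋₊ + 1 - ⌈a⌉₊ : ℕ) : ℝ) := by
        rw [← Nat.card_Icc]; exact_mod_cast card_le_card hsub
    _ = ⌊b⌋₊ + 1 - ⌈a⌉₊ := by push_cast [Nat.cast_sub hne]; ring
    _ ≤ b - a + 1 := by linarith [Nat.floor_le hb, Nat.le_ceil a]

lemma card_le_of_forall_mod_eq {s : Finset ℕ} {a b : ℝ} (hab : a ≤ b) {k : ℕ} (hk : 0 < k)
    (c : ℕ) (hs : ∀ u ∈ s, u % k = c ∧ (u : ℝ) ∈ Set.Icc a b) :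
    (#s : ℝ) ≤ (b - a) / k + 1 := by
  have hk' : (0 : ℝ) < k := by exact_mod_cast hk
  have hdiv : ∀ u ∈ s, ((u / k : ℕ) : ℝ) = (u - c) / k := fun u hu => by
    rw [eq_div_iff hk'.ne', ← (hs u hu).1]
    have := Nat.div_add_mod u k
    rw [eq_sub_iff_add_eq, mul_comm]; exact_mod_cast this
  have hinj : Set.InjOn (· / k) (s : Set ℕ) := fun u hu v hv huv => by
    simp only at huv
    rw [← Nat.div_add_mod u k, ← Nat.div_add_mod v k, huv, (hs u hu).1, (hs v hv).1]
  rw [← card_image_of_injOn hinj]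
  convert card_le_of_forall_mem_Icc (s := s.image (· / k)) (a := (a - c) / k)
    (b := (b - c) / k) (by gcongr) _ using 1
  · ring
  simp only [mem_image, forall_exists_index, and_imp, forall_apply_eq_imp_iff₂]
  intro u hu
  rw [hdiv u hu]
  exact ⟨by gcongr; exact (hs u hu).2.1, by gcongr; exact (hs u hu).2.2⟩

lemma sq_add_sq_le_of_add_le {e₀ e₁ L : ℝ} (h₀ : 0 ≤ e₀) (h₁ : 0 ≤ e₁) (h₀' : e₀ ≤ L / 2 + 1)
    (h₁' : e₁ ≤ L / 2 + 1) (h : e₀ + e₁ ≤ L + 1) : e₀ ^ 2 + e₁ ^ 2 ≤ L ^ 2 / 2 + L + 1 := by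
  rcases le_or_gt (e₀ + e₁) (L / 2 + 1) with hs | hs
  · nlinarith [mul_nonneg h₀ h₁]
  · nlinarith [mul_nonneg (sub_nonneg.2 h₀') (sub_nonneg.2 h₁'),
      mul_nonneg (sub_nonneg.2 hs.le) (sub_nonneg.2 h)]

lemma card_le_of_forall_mem_Icc_of_add_mod_two {T : Finset (ℕ × ℕ)} {a b : ℝ} (hab : a ≤ b)
    (r : ℕ) (hT : ∀ t ∈ T, (t.1 : ℝ) ∈ Set.Icc a b ∧ (t.2 : ℝ) ∈ Set.Icc a b ∧
      (t.1 + t.2) % 2 = r % 2) :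
    (#T : ℝ) ≤ (b - a) ^ 2 / 2 + (b - a) + 1 := by
  set U := T.image Prod.fst ∪ T.image Prod.snd
  have hU : ∀ u ∈ U, (u : ℝ) ∈ Set.Icc a b := by
    simp only [U, mem_union, mem_image]
    rintro u (⟨t, ht, rfl⟩ | ⟨t, ht, rfl⟩)
    exacts [(hT t ht).1, (hT t ht).2.1]
  set e : ℕ → ℕ := fun c => #{u ∈ U | u % 2 = c}
  have he : ∀ c, (e c : ℝ) ≤ (b - a) / 2 + 1 := fun c =>
    card_le_of_forall_mod_eq hab two_pos c fun u hu =>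
      ⟨(mem_filter.1 hu).2, hU u (mem_filter.1 hu).1⟩
  have hsum : (e 0 : ℝ) + e 1 ≤ (b - a) + 1 := by
    have : e 0 + e 1 = #U := by
      simp only [e]
      rw [filter_congr (p := fun u => u % 2 = 1) (q := fun u => ¬ u % 2 = 0)
        (fun u _ => by omega), card_filter_add_card_filter_not]
    exact_mod_cast this ▸ card_le_of_forall_mem_Icc hab hU
  -- the parity of the first coordinate fixes the parity of the second
  have hslice : ∀ c, #{t ∈ T | t.1 % 2 = c} ≤ e c * e ((r + c) % 2) := fun c => by
    rw [← card_product]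
    refine card_le_card fun t ht => ?_
    obtain ⟨ht, hc⟩ := mem_filter.1 ht
    have := (hT t ht).2.2
    simp only [mem_product, mem_filter, U, mem_union, mem_image]
    exact ⟨⟨Or.inl ⟨t, ht, rfl⟩, hc⟩, ⟨Or.inr ⟨t, ht, rfl⟩, by omega⟩⟩
  have hsplit : #T = #{t ∈ T | t.1 % 2 = 0} + #{t ∈ T | t.1 % 2 = 1} := by
    rw [filter_congr (p := fun t : ℕ × ℕ => t.1 % 2 = 1) (q := fun t => ¬ t.1 % 2 = 0)
      (fun t _ => by omega), card_filter_add_card_filter_not]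
  have hcross : #T ≤ e 0 ^ 2 + e 1 ^ 2 := by
    have h₀ := hslice 0; have h₁ := hslice 1
    rw [Nat.add_zero] at h₀
    rcases Nat.mod_two_eq_zero_or_one r with hr | hr
    · rw [hr] at h₀; rw [(by omega : (r + 1) % 2 = 1)] at h₁
      rw [hsplit, sq, sq]; exact add_le_add h₀ h₁
    · rw [hr] at h₀; rw [(by omega : (r + 1) % 2 = 0)] at h₁
      calc #T ≤ e 0 * e 1 + e 1 * e 0 := hsplit ▸ add_le_add h₀ h₁
        _ = 2 * e 0 * e 1 := by ring
        _ ≤ e 0 ^ 2 + e 1 ^ 2 := two_mul_le_add_sq _ _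
  calc (#T : ℝ) ≤ (e 0 : ℝ) ^ 2 + (e 1 : ℝ) ^ 2 := by exact_mod_cast hcross
    _ ≤ _ := sq_add_sq_le_of_add_le (by positivity) (by positivity) (he 0) (he 1) hsum

lemma card_le_card_image_mul {α β : Type*} [DecidableEq β] (s : Finset α) (f : α → β)
    {B : ℝ} (hB : ∀ a ∈ s, (#{a' ∈ s | f a' = f a} : ℝ) ≤ B) : (#s : ℝ) ≤ #(s.image f) * B := by
  rw [card_eq_sum_card_image f s, Nat.cast_sum, ← nsmul_eq_mul]
  refine sum_le_card_nsmul _ _ _ fun b hb => ?_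
  obtain ⟨a, ha, rfl⟩ := mem_image.1 hb
  exact hB a ha

section HammingProfile

variable {ι : Type*} [Fintype ι] [DecidableEq ι]

def hammingProfile {β : Type*} [DecidableEq β] (x y z : ι → β) : ℕ × ℕ :=
  (#(({i | x i ≠ z i} : Finset ι) \ ({i | x i ≠ y i} : Finset ι)),
    #(({i | x i ≠ z i} : Finset ι) ∩ ({i | x i ≠ y i} : Finset ι)))

lemma hammingDist_eq_hammingProfile {β : Type*} [DecidableEq β] (x y z : ι → β) :
    hammingDist x z = (hammingProfile x y z).1 + (hammingProfile x y z).2 :=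
  (card_sdiff_add_card_inter _ _).symm

lemma hammingDist_add_hammingDist_eq (x y z : ι → Bool) :
    hammingDist x z + hammingDist y z = 2 * (hammingProfile x y z).1 + hammingDist x y := by
  set s : Finset ι := {i | x i ≠ z i}
  set D : Finset ι := {i | x i ≠ y i}
  have hy : ({i | y i ≠ z i} : Finset ι) = (s \ D) ∪ (D \ s) := by
    ext i
    simp only [s, D, mem_union, mem_sdiff, mem_filter, mem_univ, true_and]
    cases x i <;> cases y i <;> cases z i <;> decide
  rw [hammingDist_eq_hammingProfile x y z, hammingDist, hy,
    card_union_of_disjoint disjoint_sdiff_sdiff, hammingDist,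
    ← card_sdiff_add_card_inter D s, inter_comm, hammingProfile]
  ring

lemma hammingProfile_eq_of_hammingDist_eq {x y z z' : ι → Bool}
    (hx : hammingDist x z = hammingDist x z') (hy : hammingDist y z = hammingDist y z') :
    hammingProfile x y z = hammingProfile x y z' := by
  have h₁ := hammingDist_eq_hammingProfile x y z
  have h₁' := hammingDist_eq_hammingProfile x y z'
  have h₂ := hammingDist_add_hammingDist_eq x y z
  have h₂' := hammingDist_add_hammingDist_eq x y z'
  ext <;> omega

lemma card_hammingProfile_eq_le (x y : ι → Bool) (j k : ℕ) :
    #{z | hammingProfile x y z = (j, k)} ≤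
      (Fintype.card ι - hammingDist x y).choose j * (hammingDist x y).choose k := by
  set D : Finset ι := {i | x i ≠ y i}
  set s : (ι → Bool) → Finset ι := fun z => {i | x i ≠ z i}
  calc #{z | hammingProfile x y z = (j, k)}
      ≤ #(powersetCard j Dᶜ ×ˢ powersetCard k D) := by
        refine card_le_card_of_injOn (fun z => (s z \ D, s z ∩ D))
          (fun z hz => ?_) (fun z _ z' _ hzz' => ?_)
        · obtain ⟨hj, hk⟩ := Prod.ext_iff.1 (mem_filter.1 hz).2
          exact mem_product.2
            ⟨mem_powersetCard.2 ⟨fun i hi => mem_compl.2 (mem_sdiff.1 hi).2, hj⟩,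
              mem_powersetCard.2 ⟨inter_subset_right, hk⟩⟩
        · obtain ⟨h₁, h₂⟩ := Prod.ext_iff.1 hzz'
          have hs : s z = s z' := by
            rw [← sdiff_union_inter (s z) D, ← sdiff_union_inter (s z') D]
            exact congrArg₂ (· ∪ ·) h₁ h₂
          funext i
          have := Finset.ext_iff.1 hs i
          simp only [s, mem_filter, mem_univ, true_and] at this
          revert this
          cases x i <;> cases z i <;> cases z' i <;> decide
    _ = _ := by rw [card_product, card_powersetCard, card_powersetCard, card_compl]; rfl

lemma card_hammingProfile_eq_le_two_rpow (x y : ι → Bool) (j k : ℕ) :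
    (#{z | hammingProfile x y z = (j, k)} : ℝ) ≤
      2 ^ (((Fintype.card ι - hammingDist x y : ℕ) : ℝ) *
        binH (j / (Fintype.card ι - hammingDist x y : ℕ)) + hammingDist x y) := by
  rw [rpow_add two_pos, rpow_natCast]
  calc (#{z | hammingProfile x y z = (j, k)} : ℝ)
      ≤ (Fintype.card ι - hammingDist x y).choose j * (hammingDist x y).choose k := by
        exact_mod_cast card_hammingProfile_eq_le x y j k
    _ ≤ _ := by
        gcongr
        · exact choose_le_two_rpow_binH _ _
        · exact_mod_cast Nat.choose_le_two_pow _ _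

end HammingProfile

theorem card_le_of_hammingDist_mem_Icc {ι : Type*} [Fintype ι] [DecidableEq ι]
    (x y : ι → Bool) {S : Finset (ι → Bool)} {a b : ℝ} (hab : a ≤ b)
    (hb : b ≤ Fintype.card ι / 2)
    (hS : ∀ z ∈ S, (hammingDist x z : ℝ) ∈ Set.Icc a b ∧ (hammingDist y z : ℝ) ∈ Set.Icc a b) :
    (#S : ℝ) ≤ ((b - a) ^ 2 / 2 + (b - a) + 1) *
      2 ^ (((Fintype.card ι - hammingDist x y : ℕ) : ℝ) *
        binH ((b - hammingDist x y / 2) / (Fintype.card ι - hammingDist x y : ℕ)) +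
          hammingDist x y) := by
  set d := hammingDist x y
  set m := Fintype.card ι - d
  set f : (ι → Bool) → ℕ × ℕ := fun z => (hammingDist x z, hammingDist y z)
  have hsum : ∀ z, (hammingDist x z + hammingDist y z : ℝ) =
      2 * (hammingProfile x y z).1 + d := fun z => by
    exact_mod_cast hammingDist_add_hammingDist_eq x y z
  have hpairs : (#(S.image f) : ℝ) ≤ (b - a) ^ 2 / 2 + (b - a) + 1 := by
    refine card_le_of_forall_mem_Icc_of_add_mod_two hab d ?_
    simp only [mem_image, forall_exists_index, and_imp, forall_apply_eq_imp_iff₂, f]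
    intro z hz
    refine ⟨(hS z hz).1, (hS z hz).2, ?_⟩
    rw [hammingDist_add_hammingDist_eq]; omega
  have hfiber : ∀ z₀ ∈ S, (#{z ∈ S | f z = f z₀} : ℝ) ≤
      2 ^ ((m : ℝ) * binH ((b - d / 2) / m) + d) := by
    intro z₀ hz₀
    set j := (hammingProfile x y z₀).1
    have hj : (j : ℝ) ≤ b - d / 2 := by
      linarith [hsum z₀, (hS z₀ hz₀).1.2, (hS z₀ hz₀).2.2]
    have hm : (m : ℝ) = Fintype.card ι - d := Nat.cast_sub hammingDist_le_card_fintype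
    calc (#{z ∈ S | f z = f z₀} : ℝ)
        ≤ #{z | hammingProfile x y z = (j, (hammingProfile x y z₀).2)} := by
          refine Nat.cast_le.2 (card_le_card fun z hz => mem_filter.2 ⟨mem_univ z, ?_⟩)
          obtain ⟨-, hz⟩ := mem_filter.1 hz
          exact hammingProfile_eq_of_hammingDist_eq (Prod.ext_iff.1 hz).1
            (Prod.ext_iff.1 hz).2
      _ ≤ 2 ^ ((m : ℝ) * binH (j / m) + d) := card_hammingProfile_eq_le_two_rpow x y _ _
      _ ≤ _ := by
          gcongr 2 ^ (?_ + _)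
          · exact one_le_two
          · exact mul_binH_div_le_mul_binH_div (by positivity) (by positivity) hj
              (by linarith)
  calc (#S : ℝ) ≤ #(S.image f) * 2 ^ ((m : ℝ) * binH ((b - d / 2) / m) + d) :=
        card_le_card_image_mul S f hfiber
    _ ≤ _ := by gcongr

theorem typical_intersection_card_bound_general (n : ℕ) (p ε σ : ℝ)
    (hε : 0 < ε) (hε' : ε < 1/2 - p) (x y : Fin n → Bool)
    (hd : (hammingDist x y : ℝ) = 2 * σ * n) :
    ((typSet n p ε x ∩ typSet n p ε y).card : ℝ) ≤
      (Real.sqrt 2 * ε * n + 1) ^ 2 *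
        (2 : ℝ) ^ ((n : ℝ) * ((1 - 2*σ) * binH ((p - σ + ε) / (1 - 2*σ)) + 2*σ)) := by
  have hab : (n : ℝ) * (p - ε) ≤ n * (p + ε) := by gcongr; linarith
  have hb : (n : ℝ) * (p + ε) ≤ Fintype.card (Fin n) / 2 := by
    rw [Fintype.card_fin]; nlinarith [n.cast_nonneg (α := ℝ)]
  have hS : ∀ z ∈ typSet n p ε x ∩ typSet n p ε y,
      (hammingDist x z : ℝ) ∈ Set.Icc (n * (p - ε)) (n * (p + ε)) ∧
        (hammingDist y z : ℝ) ∈ Set.Icc (n * (p - ε)) (n * (p + ε)) := fun z hz => by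
    simpa [typSet] using hz
  have hexp : ((Fintype.card (Fin n) - hammingDist x y : ℕ) : ℝ) *
      binH ((n * (p + ε) - hammingDist x y / 2) / (Fintype.card (Fin n) - hammingDist x y : ℕ))
        + hammingDist x y = n * ((1 - 2 * σ) * binH ((p - σ + ε) / (1 - 2 * σ)) + 2 * σ) := by
    rw [Nat.cast_sub hammingDist_le_card_fintype, hd, Fintype.card_fin]
    rcases eq_or_ne (n : ℝ) 0 with h0 | h0
    · simp [h0]
    · rw [show (n : ℝ) * (p + ε) - 2 * σ * n / 2 = n * (p - σ + ε) by ring,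
        show (n : ℝ) - 2 * σ * n = n * (1 - 2 * σ) by ring, mul_div_mul_left _ _ h0]
      ring
  have hcount : (n * (p + ε) - n * (p - ε) : ℝ) ^ 2 / 2 + (n * (p + ε) - n * (p - ε)) + 1 ≤
      (Real.sqrt 2 * ε * n + 1) ^ 2 := by
    have hεn : 0 ≤ ε * n := by positivity
    nlinarith [Real.sq_sqrt (zero_le_two (α := ℝ)), Real.one_lt_sqrt_two]
  calc _ ≤ _ := card_le_of_hammingDist_mem_Icc x y hab hb hS
    _ ≤ _ := by rw [hexp]; gcongr

theorem typical_intersection_card_bound (n : ℕ) (p ε σ : ℝ) (hp : 0 < p) (hp' : p < 1/2)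
    (hε : 0 < ε) (hε' : ε < 1/2 - p) (x y : Fin n → Bool)
    (hd : (hammingDist x y : ℝ) = 2 * σ * n) (hσ : σ ≤ p + 2 * ε) :
    ((typSet n p ε x ∩ typSet n p ε y).card : ℝ) ≤
      (Real.sqrt 2 * ε * n + 1) ^ 2 *
        (2 : ℝ) ^ ((n : ℝ) * ((1 - 2*σ) * binH ((p - σ + ε) / (1 - 2*σ)) + 2*σ)) :=
  typical_intersection_card_bound_general n p ε σ hε hε' x y hd
end

section
/- The function g_p(σ) = (1−2σ)·h((p−σ)/(1−2σ)) + 2σ defined on [0,p] with p ∈ (0,1/2) is strictly monotonically decreasing, with g_p(0) = h(p) and g_p(p) = 2p. -/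
/-- The function `g_p(σ) = (1 - 2σ) h((p-σ)/(1-2σ)) + 2σ`. -/
noncomputable def gFun (p σ : ℝ) : ℝ := (1 - 2*σ) * binH ((p - σ) / (1 - 2*σ)) + 2*σ

/-!
With `a = p - σ` and `b = 1 - p - σ`, so that `a + b = 1 - 2σ`, the scaling rule
`negMulLog (x * y) = y * negMulLog x + x * negMulLog y` rewrites `g_p` as
`(negMulLog a + negMulLog b - negMulLog (a + b)) / log 2 + 2σ`, which is differentiable wherever
`a`, `b`, `a + b` are nonzero. Its derivative `(log a + log b - 2 log ((a + b) / 2)) / log 2` is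
negative on `(0, p)` by strict concavity of `log`, because `a - b = 2p - 1 ≠ 0`.
-/

open Real

lemma binH_eq_negMulLog (q : ℝ) : binH q = (negMulLog q + negMulLog (1 - q)) / log 2 := by
  simp only [binH, negMulLog, logb]
  ring

lemma add_mul_binH_div_add (a b : ℝ) :
    (a + b) * binH (a / (a + b)) = (negMulLog a + negMulLog b - negMulLog (a + b)) / log 2 := by
  rcases eq_or_ne (a + b) 0 with hs | hs
  · -- `a / 0 = 0`, and `negMulLog (-a) = -negMulLog a` because `log (-a) = log a`
    obtain rfl : b = -a := by linarith
    simp [negMulLog, log_neg_eq_log]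
  · have hb : b = (1 - a / (a + b)) * (a + b) := by field_simp; ring
    have ha : a = a / (a + b) * (a + b) := (div_mul_cancel₀ a hs).symm
    generalize a / (a + b) = q at ha hb ⊢
    generalize a + b = s at ha hb ⊢
    subst ha hb
    rw [binH_eq_negMulLog, negMulLog_mul, negMulLog_mul]
    ring

lemma gFun_eq (p σ : ℝ) :
    gFun p σ = (negMulLog (p - σ) + negMulLog (1 - p - σ) - negMulLog (1 - 2 * σ)) / log 2
      + 2 * σ := by
  rw [gFun, show 1 - 2 * σ = (p - σ) + (1 - p - σ) by ring, add_mul_binH_div_add]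

lemma continuous_gFun (p : ℝ) : Continuous (gFun p) := by
  simp only [funext (gFun_eq p)]
  fun_prop

lemma hasDerivAt_gFun {p x : ℝ} (ha : p - x ≠ 0) (hb : 1 - p - x ≠ 0) (hs : 1 - 2 * x ≠ 0) :
    HasDerivAt (gFun p)
      ((log (p - x) + log (1 - p - x) - 2 * log ((1 - 2 * x) / 2)) / log 2) x := by
  have := ((((hasDerivAt_negMulLog ha).comp x ((hasDerivAt_id x).const_sub p)).add
    ((hasDerivAt_negMulLog hb).comp x ((hasDerivAt_id x).const_sub (1 - p)))).sub
    ((hasDerivAt_negMulLog hs).comp x (((hasDerivAt_id x).const_mul 2).const_sub 1))).div_const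
    (log 2) |>.add ((hasDerivAt_id x).const_mul 2)
  rw [funext (gFun_eq p)]
  refine this.congr_deriv ?_
  rw [log_div hs two_ne_zero]
  field_simp [(log_pos one_lt_two).ne']
  ring

lemma log_add_log_lt_two_mul_log_half_add {a b : ℝ} (ha : 0 < a) (hb : 0 < b) (hab : a ≠ b) :
    log a + log b < 2 * log ((a + b) / 2) := by
  have := strictConcaveOn_log_Ioi.2 ha hb hab one_half_pos one_half_pos (add_halves 1)
  simp only [smul_eq_mul] at this
  rw [show (a + b) / 2 = 1 / 2 * a + 1 / 2 * b by ring]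
  linarith

theorem gFun_strictAnti_and_endpoints_general (p : ℝ) (hp' : p < 1/2) :
    StrictAntiOn (gFun p) (Set.Icc 0 p) ∧ gFun p 0 = binH p ∧ gFun p p = 2 * p := by
  refine ⟨strictAntiOn_of_deriv_neg (convex_Icc 0 p) (continuous_gFun p).continuousOn ?_,
    by simp [gFun], by simp [gFun, binH]⟩
  rw [interior_Icc]
  rintro x ⟨-, hxp⟩
  have ha : 0 < p - x := by linarith
  have hb : 0 < 1 - p - x := by linarith
  rw [(hasDerivAt_gFun ha.ne' hb.ne' (by linarith)).deriv]
  refine div_neg_of_neg_of_pos ?_ (log_pos one_lt_two)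
  have := log_add_log_lt_two_mul_log_half_add ha hb (by linarith)
  rw [show p - x + (1 - p - x) = 1 - 2 * x by ring] at this
  linarith

theorem gFun_strictAnti_and_endpoints (p : ℝ) (hp : 0 < p) (hp' : p < 1/2) :
    StrictAntiOn (gFun p) (Set.Icc 0 p) ∧ gFun p 0 = binH p ∧ gFun p p = 2 * p :=
  gFun_strictAnti_and_endpoints_general p hp'
end

section
/- For the n-fold binary symmetric channel W^n with crossover probability p ∈ (0,1/2), set ε_n = n^{−1/3}, μ_n = 8·2^{−n^{1/3}} and l(n,p) = n(h(p) − ε_n·log₂((1−p)/p)). Then for every x ∈ {0,1}^n, the smooth min-entropy of the output satisfies H_min^{μ_n}(Z)_{W^n(x)} ≥ l(n,p). Moreover μ_n → 0 and l(n,p)/n → h(p) as n → ∞. -/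
open scoped Classical

/-- Probability that the `n`-fold BSC with crossover `p` maps input `x` to output `z`. -/
noncomputable def bscProb (n : ℕ) (p : ℝ) (x z : Fin n → Bool) : ℝ :=
  p ^ (hammingDist x z) * (1 - p) ^ (n - hammingDist x z)

/-- Generalized trace distance. -/
noncomputable def GTD {Z : Type*} [Fintype Z] (P Q : Z → ℝ) : ℝ :=
  (1/2) * ∑ z, |P z - Q z| + (1/2) * |∑ z, (P z - Q z)|

/-- Subnormalized distribution. -/
def IsSubDist {Z : Type*} [Fintype Z] (P : Z → ℝ) : Prop := (∀ z, 0 ≤ P z) ∧ ∑ z, P z ≤ 1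

noncomputable def μseq (n : ℕ) : ℝ := 8 * (2 : ℝ) ^ (-((n : ℝ) ^ ((1:ℝ)/3)))

noncomputable def lBound (n : ℕ) (p : ℝ) : ℝ :=
  (n : ℝ) * (binH p - (n : ℝ) ^ (-(1:ℝ)/3) * Real.logb 2 ((1 - p) / p))

/-!
Cut the output distribution `W = W^n(x)` off at the threshold `τ = 2^(-l(n,p))`: the result is
subnormalized, bounded by `τ`, and at generalized trace distance from `W` equal to the mass of
the outputs with `W z > τ`. Since `W z = p^d (1-p)^(n-d)` decreases in the Hamming distance
`d = d(x,z)` and `τ` is its value at `d = n(p - ε)` with `ε = n^(-1/3)`, those outputs lie in the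
lower tail `d ≤ n(p - ε)`, whose mass a Chernoff bound with parameter `2ε` controls by
`exp(-n ε²) = exp(-n^(1/3)) ≤ μ_n`.
-/

open Finset Real Filter Topology

section Truncation

variable {Z : Type*}

noncomputable def cutoff (W : Z → ℝ) (τ : ℝ) (z : Z) : ℝ := if W z ≤ τ then W z else 0

lemma isSubDist_cutoff [Fintype Z] {W : Z → ℝ} (hW : IsSubDist W) (τ : ℝ) :
    IsSubDist (cutoff W τ) := by
  refine ⟨fun z => ?_, le_trans (sum_le_sum fun z _ => ?_) hW.2⟩ <;>
    unfold cutoff <;> split_ifs <;> simp [hW.1 z]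

lemma cutoff_le {W : Z → ℝ} {τ : ℝ} (hτ : 0 ≤ τ) (z : Z) : cutoff W τ z ≤ τ := by
  unfold cutoff; split_ifs <;> assumption

lemma GTD_cutoff [Fintype Z] {W : Z → ℝ} (hW : ∀ z, 0 ≤ W z) (τ : ℝ) :
    GTD (cutoff W τ) W = ∑ z with τ < W z, W z := by
  have hsub (z : Z) : cutoff W τ z - W z = if τ < W z then -W z else 0 := by
    unfold cutoff; split_ifs <;> linarith
  have habs (z : Z) : |cutoff W τ z - W z| = if τ < W z then W z else 0 := by
    rw [hsub]; split_ifs <;> simp [hW z]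
  have hmass : 0 ≤ ∑ z with τ < W z, W z := sum_nonneg fun z _ => hW z
  simp only [GTD, habs]
  simp only [hsub, sum_ite, sum_const_zero, add_zero, sum_neg_distrib, abs_neg,
    abs_of_nonneg hmass]
  ring

end Truncation

lemma sum_pow_hammingDist_mul_pow {ι : Type*} [Fintype ι] [DecidableEq ι] (x : ι → Bool)
    (r s : ℝ) :
    ∑ z : ι → Bool, r ^ hammingDist x z * s ^ (Fintype.card ι - hammingDist x z)
      = (r + s) ^ Fintype.card ι := by
  have hprod (z : ι → Bool) : r ^ hammingDist x z * s ^ (Fintype.card ι - hammingDist x z)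
      = ∏ i, if x i = z i then s else r := by
    have hcard := card_filter_add_card_filter_not (s := univ) (fun i => x i = z i)
    rw [card_univ] at hcard
    rw [prod_ite, prod_const, prod_const, hammingDist, ← hcard]
    simp only [ne_eq, Nat.add_sub_cancel]
    ring
  have hbool (i : ι) : ∑ b : Bool, (if x i = b then s else r) = r + s := by
    cases x i <;> simp [add_comm]
  rw [sum_congr rfl fun z _ => hprod z,
    ← Fintype.prod_sum fun i b => if x i = b then s else r, prod_congr rfl fun i _ => hbool i,
    prod_const, card_univ]

lemma exp_neg_le_one_sub_add_sq_div_two {t : ℝ} (ht : 0 ≤ t) : exp (-t) ≤ 1 - t + t ^ 2 / 2 := by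
  rw [exp_neg, inv_le_iff_one_le_mul₀ (exp_pos t)]
  -- the product on the right is `1 + t ^ 4 / 4`
  calc (1 : ℝ) ≤ (1 - t + t ^ 2 / 2) * (1 + t + t ^ 2 / 2) := by nlinarith [pow_nonneg ht 4]
    _ ≤ (1 - t + t ^ 2 / 2) * exp t :=
        mul_le_mul_of_nonneg_left (quadratic_le_exp_of_nonneg ht) (by nlinarith)

lemma exp_neg_mul_add_one_sub_le {p t : ℝ} (hp : 0 ≤ p) (ht : 0 ≤ t) :
    exp (-t) * p + (1 - p) ≤ exp (p * (t ^ 2 / 2 - t)) := by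
  have := mul_le_mul_of_nonneg_right (exp_neg_le_one_sub_add_sq_div_two ht) hp
  linarith [add_one_le_exp (p * (t ^ 2 / 2 - t))]

section BSC

variable {n : ℕ} {p : ℝ} (x : Fin n → Bool)

lemma bscProb_nonneg (hp₀ : 0 ≤ p) (hp₁ : p ≤ 1) (z : Fin n → Bool) : 0 ≤ bscProb n p x z := by
  unfold bscProb; have := sub_nonneg.2 hp₁; positivity

lemma sum_bscProb : ∑ z, bscProb n p x z = 1 := by
  simpa [bscProb] using sum_pow_hammingDist_mul_pow x p (1 - p)

lemma isSubDist_bscProb (hp₀ : 0 ≤ p) (hp₁ : p ≤ 1) : IsSubDist (bscProb n p x) :=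
  ⟨bscProb_nonneg x hp₀ hp₁, (sum_bscProb x).le⟩

theorem sum_bscProb_hammingDist_le_le_exp_mul (hp₀ : 0 ≤ p) (hp₁ : p ≤ 1) {t : ℝ} (ht : 0 ≤ t)
    (k : ℝ) :
    ∑ z with (hammingDist x z : ℝ) ≤ k, bscProb n p x z
      ≤ exp (t * k) * (exp (-t) * p + (1 - p)) ^ n := by
  have hweight (z : Fin n → Bool) :
      exp (t * k) * exp (-t) ^ hammingDist x z * bscProb n p x z
        = exp (t * k) * ((exp (-t) * p) ^ hammingDist x z * (1 - p) ^ (n - hammingDist x z)) := by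
    rw [bscProb, mul_pow]; ring
  calc ∑ z with (hammingDist x z : ℝ) ≤ k, bscProb n p x z
      ≤ ∑ z with (hammingDist x z : ℝ) ≤ k,
          exp (t * k) * exp (-t) ^ hammingDist x z * bscProb n p x z := by
        refine sum_le_sum fun z hz => le_mul_of_one_le_left (bscProb_nonneg x hp₀ hp₁ z) ?_
        rw [← exp_nat_mul, ← exp_add]
        exact one_le_exp (by nlinarith [(mem_filter.1 hz).2])
    _ ≤ ∑ z, exp (t * k) * exp (-t) ^ hammingDist x z * bscProb n p x z :=
        sum_le_sum_of_subset_of_nonneg (filter_subset _ _) fun z _ _ => by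
          have := bscProb_nonneg x hp₀ hp₁ z; positivity
    _ = exp (t * k) * (exp (-t) * p + (1 - p)) ^ n := by
        simp_rw [hweight, ← mul_sum]
        simpa using
          congrArg (exp (t * k) * ·) (sum_pow_hammingDist_mul_pow x (exp (-t) * p) (1 - p))

theorem sum_bscProb_hammingDist_le_le_exp (hp₀ : 0 ≤ p) (hp₁ : p ≤ 1) {ε : ℝ} (hε : 0 ≤ ε) :
    ∑ z with (hammingDist x z : ℝ) ≤ n * (p - ε), bscProb n p x z
      ≤ exp (-(2 * (1 - p) * (n * ε ^ 2))) := by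
  calc ∑ z with (hammingDist x z : ℝ) ≤ n * (p - ε), bscProb n p x z
      ≤ exp (2 * ε * (n * (p - ε))) * (exp (-(2 * ε)) * p + (1 - p)) ^ n :=
        sum_bscProb_hammingDist_le_le_exp_mul x hp₀ hp₁ (by positivity) _
    _ ≤ exp (2 * ε * (n * (p - ε))) * exp (p * ((2 * ε) ^ 2 / 2 - 2 * ε)) ^ n := by
        gcongr
        exact exp_neg_mul_add_one_sub_le hp₀ (by positivity)
    _ = exp (-(2 * (1 - p) * (n * ε ^ 2))) := by
        rw [← exp_nat_mul, ← exp_add]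
        ring_nf

lemma logb_bscProb (hp₀ : 0 < p) (hp₁ : p < 1) (z : Fin n → Bool) :
    logb 2 (bscProb n p x z)
      = hammingDist x z * logb 2 p + (n - hammingDist x z) * logb 2 (1 - p) := by
  have hq : 0 < 1 - p := sub_pos.2 hp₁
  rw [bscProb, logb_mul (by positivity) (by positivity), logb_pow, logb_pow,
    Nat.cast_sub (hammingDist_le_card_fintype.trans_eq (Fintype.card_fin n))]

end BSC

lemma neg_lBound_eq {p : ℝ} (hp₀ : 0 < p) (hp₁ : p < 1) (n : ℕ) :
    -lBound n p = n * (p - (n : ℝ) ^ (-(1:ℝ)/3)) * logb 2 p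
      + (n - n * (p - (n : ℝ) ^ (-(1:ℝ)/3))) * logb 2 (1 - p) := by
  rw [lBound, binH, logb_div (sub_pos.2 hp₁).ne' hp₀.ne']
  ring

lemma hammingDist_lt_of_rpow_neg_lBound_lt {n : ℕ} {p : ℝ} (hp₀ : 0 < p) (hp : p < 1 / 2)
    {x z : Fin n → Bool} (h : (2 : ℝ) ^ (-lBound n p) < bscProb n p x z) :
    (hammingDist x z : ℝ) < n * (p - (n : ℝ) ^ (-(1:ℝ)/3)) := by
  have hp₁ : p < 1 := by linarith
  have hlog : logb 2 p < logb 2 (1 - p) := logb_lt_logb one_lt_two hp₀ (by linarith)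
  rw [← lt_logb_iff_rpow_lt one_lt_two (h.trans' (by positivity)), neg_lBound_eq hp₀ hp₁,
    logb_bscProb x hp₀ hp₁] at h
  nlinarith

lemma natCast_mul_rpow_neg_third_sq (n : ℕ) :
    n * ((n : ℝ) ^ (-(1:ℝ)/3)) ^ 2 = (n : ℝ) ^ ((1:ℝ)/3) := by
  rcases n.eq_zero_or_pos with rfl | hn
  · simp
  · have hn : (0 : ℝ) < n := Nat.cast_pos.2 hn
    rw [← rpow_natCast, ← rpow_mul hn.le, ← rpow_one_add' hn.le (by norm_num)]
    norm_num

lemma exp_neg_rpow_third_le_μseq (n : ℕ) : exp (-(n : ℝ) ^ ((1:ℝ)/3)) ≤ μseq n := by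
  calc exp (-(n : ℝ) ^ ((1:ℝ)/3)) ≤ 2 ^ (-(n : ℝ) ^ ((1:ℝ)/3)) := by
        rw [rpow_def_of_pos two_pos, exp_le_exp]
        nlinarith [log_two_lt_d9, rpow_nonneg (Nat.cast_nonneg n) ((1:ℝ)/3)]
    _ ≤ μseq n := by
        rw [μseq]
        linarith [rpow_nonneg zero_le_two (-(n : ℝ) ^ ((1:ℝ)/3))]

lemma GTD_cutoff_bscProb_le_μseq {n : ℕ} {p : ℝ} (hp₀ : 0 < p) (hp : p < 1 / 2)
    (x : Fin n → Bool) :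
    GTD (cutoff (bscProb n p x) (2 ^ (-lBound n p))) (bscProb n p x) ≤ μseq n := by
  have hp₁ : p ≤ 1 := by linarith
  have hε : (0 : ℝ) ≤ (n : ℝ) ^ (-(1:ℝ)/3) := by positivity
  rw [GTD_cutoff (bscProb_nonneg x hp₀.le hp₁)]
  calc ∑ z with (2 : ℝ) ^ (-lBound n p) < bscProb n p x z, bscProb n p x z
      ≤ ∑ z with (hammingDist x z : ℝ) ≤ n * (p - (n : ℝ) ^ (-(1:ℝ)/3)), bscProb n p x z :=
        sum_le_sum_of_subset_of_nonneg
          (monotone_filter_right univ fun _ _ h =>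
            (hammingDist_lt_of_rpow_neg_lBound_lt hp₀ hp h).le)
          fun z _ _ => bscProb_nonneg x hp₀.le hp₁ z
    _ ≤ exp (-(2 * (1 - p) * (n * ((n : ℝ) ^ (-(1:ℝ)/3)) ^ 2))) :=
        sum_bscProb_hammingDist_le_le_exp x hp₀.le hp₁ hε
    _ ≤ exp (-(n : ℝ) ^ ((1:ℝ)/3)) := by
        rw [natCast_mul_rpow_neg_third_sq, exp_le_exp]
        nlinarith [rpow_nonneg (Nat.cast_nonneg n) ((1:ℝ)/3)]
    _ ≤ μseq n := exp_neg_rpow_third_le_μseq n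

lemma tendsto_μseq : Tendsto μseq atTop (𝓝 0) := by
  have h := ((tendsto_rpow_atBot_of_base_gt_one 2 one_lt_two).comp
    (tendsto_neg_atTop_atBot.comp ((tendsto_rpow_atTop (by norm_num : (0:ℝ) < 1/3)).comp
      tendsto_natCast_atTop_atTop))).const_mul 8
  rw [mul_zero] at h
  exact h

lemma tendsto_lBound_div_natCast (p : ℝ) :
    Tendsto (fun n : ℕ => lBound n p / n) atTop (𝓝 (binH p)) := by
  have hε : Tendsto (fun n : ℕ => (n : ℝ) ^ (-(1:ℝ)/3)) atTop (𝓝 0) := by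
    simpa [neg_div, Function.comp_def] using
      (tendsto_rpow_neg_atTop (by norm_num : (0:ℝ) < 1/3)).comp tendsto_natCast_atTop_atTop
  have h := tendsto_const_nhds (x := binH p) |>.sub (hε.mul_const (logb 2 ((1 - p) / p)))
  rw [zero_mul, sub_zero] at h
  refine h.congr' ?_
  filter_upwards [eventually_ne_atTop 0] with n hn
  rw [lBound, mul_div_cancel_left₀ _ (Nat.cast_ne_zero.2 hn)]

theorem bsc_smooth_min_entropy (p : ℝ) (hp : 0 < p) (hp' : p < 1/2) :
    (∀ n : ℕ, ∀ x : Fin n → Bool,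
      ∃ P' : (Fin n → Bool) → ℝ, IsSubDist P' ∧ GTD P' (bscProb n p x) ≤ μseq n ∧
        ∀ z, P' z ≤ (2 : ℝ) ^ (-(lBound n p))) ∧
    Filter.Tendsto μseq Filter.atTop (nhds 0) ∧
    Filter.Tendsto (fun n : ℕ => lBound n p / (n : ℝ)) Filter.atTop (nhds (binH p)) :=
  ⟨fun n x => ⟨cutoff (bscProb n p x) (2 ^ (-lBound n p)),
      isSubDist_cutoff (isSubDist_bscProb x hp.le (by linarith)) _,
      GTD_cutoff_bscProb_le_μseq hp hp' x, cutoff_le (by positivity)⟩,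
    tendsto_μseq, tendsto_lBound_div_natCast p⟩
end
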